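/- Sup bound for magnetic Schrödinger operators with unit mass (a priori estimate behind Lemmas 3 and 6 of the paper): let λ₁,…,λₙ > 0, let A : ℝⁿ → ℝⁿ be C¹, let φ : ℝⁿ → ℂ be a bounded C² function, and let h : ℝⁿ → ℂ be bounded. If −Σⱼ λⱼ² (∂ⱼ − iAⱼ)((∂ⱼ − iAⱼ)φ)(x) + φ(x) = h(x) for every x ∈ ℝⁿ, then sup_{ℝⁿ} |φ| ≤ sup_{ℝⁿ} |h|. -/

import Mathlib

/-!
For `w = ‖φ‖²` the gauge-covariant Leibniz rule `∂ⱼ (ū v) = conj (Dⱼu) v + ū Dⱼv` gives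
`∂ⱼ²w = 2‖Dⱼφ‖² + 2 Re (φ̄ Dⱼ²φ)`, so the equation yields
`Σⱼ λⱼ² ∂ⱼ²w ≥ 2 Re (φ̄ (φ - h)) ≥ w - ‖h‖²`.
At a maximum of `w` the left side is `≤ 0`. Since `ℝⁿ` is not compact, one maximises
`w - ε|· - y|²` instead, which is still `≥ w y` at its maximum and costs only `ε` in each `∂ⱼ²`;
letting `ε → 0` gives `w ≤ sup ‖h‖²`.
-/

open Complex

noncomputable section

/-- Partial derivative in the `j`-th coordinate direction. -/
def pd {n : ℕ} {E : Type*} [NormedAddCommGroup E] [NormedSpace ℝ E]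
    (j : Fin n) (f : (Fin n → ℝ) → E) (x : Fin n → ℝ) : E :=
  fderiv ℝ f x (Pi.single j 1)

/-- Covariant partial derivative `(∂ⱼ − iAⱼ)φ = ∂ⱼφ − iAⱼφ`. -/
def covD {n : ℕ} (j : Fin n) (A : (Fin n → ℝ) → Fin n → ℝ)
    (u : (Fin n → ℝ) → ℂ) (x : Fin n → ℝ) : ℂ :=
  pd j u x - Complex.I * (A x j : ℂ) * u x

open Filter Topology ComplexConjugate

theorem IsLocalMax.deriv_deriv_nonpos {f : ℝ → ℝ} {a : ℝ} (hmax : IsLocalMax f a)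
    (hf : ContinuousAt f a) : deriv (deriv f) a ≤ 0 := by
  by_contra! hpos
  have hmin := isLocalMin_of_deriv_deriv_pos hpos hmax.deriv_eq_zero hf
  have hconst : f =ᶠ[𝓝 a] fun _ => f a :=
    (hmax.and hmin).mono fun _ hy => le_antisymm hy.1 hy.2
  have : deriv (deriv f) a = 0 := by
    rw [hconst.deriv.deriv_eq]
    simp
  exact hpos.ne' this

namespace PartialDeriv

variable {n : ℕ} {E F : Type*} [NormedAddCommGroup E] [NormedSpace ℝ E]
  [NormedAddCommGroup F] [NormedSpace ℝ F] {f g : (Fin n → ℝ) → E} {x : Fin n → ℝ} {j : Fin n}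

theorem _root_.HasFDerivAt.pd_eq {f' : (Fin n → ℝ) →L[ℝ] E} (hf : HasFDerivAt f f' x) :
    pd j f x = f' (Pi.single j 1) := by
  rw [pd, hf.fderiv]

theorem pd_comp_clm (L : E →L[ℝ] F) (hf : DifferentiableAt ℝ f x) :
    pd j (fun y => L (f y)) x = L (pd j f x) :=
  (L.hasFDerivAt.comp x hf.hasFDerivAt).pd_eq

theorem pd_re {u : (Fin n → ℝ) → ℂ} (hu : DifferentiableAt ℝ u x) :
    pd j (fun y => (u y).re) x = (pd j u x).re :=
  pd_comp_clm reCLM hu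

theorem pd_conj {u : (Fin n → ℝ) → ℂ} (hu : DifferentiableAt ℝ u x) :
    pd j (fun y => conj (u y)) x = conj (pd j u x) :=
  pd_comp_clm conjCLE.toContinuousLinearMap hu

theorem pd_sub (hf : DifferentiableAt ℝ f x) (hg : DifferentiableAt ℝ g x) :
    pd j (fun y => f y - g y) x = pd j f x - pd j g x :=
  (hf.hasFDerivAt.sub hg.hasFDerivAt).pd_eq

variable {𝔸 : Type*} [NormedCommRing 𝔸] [NormedAlgebra ℝ 𝔸] {a b : (Fin n → ℝ) → 𝔸}

theorem pd_mul (ha : DifferentiableAt ℝ a x) (hb : DifferentiableAt ℝ b x) :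
    pd j (fun y => a y * b y) x = pd j a x * b x + a x * pd j b x := by
  rw [pd, fderiv_fun_mul ha hb]
  simp [pd, add_comm, mul_comm]

theorem pd_const_mul (ha : DifferentiableAt ℝ a x) (c : 𝔸) :
    pd j (fun y => c * a y) x = c * pd j a x :=
  (ha.hasFDerivAt.const_mul c).pd_eq

theorem contDiff_pd {k : ℕ} (hf : ContDiff ℝ (k + 1) f) (j : Fin n) :
    ContDiff ℝ k (pd j f) := by
  exact (ContinuousLinearMap.apply ℝ E (Pi.single j (1 : ℝ))).contDiff.comp
    (hf.fderiv_right le_rfl)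

theorem hasDerivAt_comp_line {t : ℝ} (hf : DifferentiableAt ℝ f (x + t • Pi.single j 1)) :
    HasDerivAt (fun s : ℝ => f (x + s • Pi.single j 1)) (pd j f (x + t • Pi.single j 1)) t := by
  have hline := ((hasDerivAt_id t).smul_const (Pi.single j (1 : ℝ) : Fin n → ℝ)).const_add x
  simpa [Function.comp_def, pd] using hf.hasFDerivAt.comp_hasDerivAt t hline

theorem pd_pd_nonpos_of_isLocalMax {w : (Fin n → ℝ) → ℝ} (hw : Differentiable ℝ w)
    (hw' : DifferentiableAt ℝ (pd j w) x) (hmax : IsLocalMax w x) : pd j (pd j w) x ≤ 0 := by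
  set g : ℝ → ℝ := fun t => w (x + t • Pi.single j 1)
  have hg' : deriv g = fun t => pd j w (x + t • Pi.single j 1) :=
    funext fun t => (hasDerivAt_comp_line (hw _)).deriv
  have hg'' : deriv (deriv g) 0 = pd j (pd j w) x := by
    rw [hg']
    simpa using (hasDerivAt_comp_line (f := pd j w) (t := 0) (by simpa using hw')).deriv
  have hline : Continuous fun t : ℝ => x + t • (Pi.single j 1 : Fin n → ℝ) := by fun_prop
  have hgmax : IsLocalMax g 0 :=
    IsLocalMax.comp_continuous (by simpa using hmax) hline.continuousAt
  rw [← hg'']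
  exact hgmax.deriv_deriv_nonpos (hw.continuous.comp hline).continuousAt

theorem pd_sum_sq_sub (y z : Fin n → ℝ) (j : Fin n) :
    pd j (fun z : Fin n → ℝ => ∑ k, (z k - y k) ^ 2) z = 2 * (z j - y j) := by
  have hq : HasFDerivAt (fun z : Fin n → ℝ => ∑ k, (z k - y k) ^ 2)
      (∑ k, (2 * (z k - y k)) •
        ContinuousLinearMap.proj (R := ℝ) (φ := fun _ : Fin n => ℝ) k) z := by
    refine HasFDerivAt.fun_sum fun k _ => ?_
    simpa using ((hasFDerivAt_apply k z).sub_const (y k)).pow 2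
  rw [hq.pd_eq]
  simp [Pi.single_apply]

theorem norm_sub_sq_le_sum_sq_sub (y z : Fin n → ℝ) : ‖z - y‖ ^ 2 ≤ ∑ k, (z k - y k) ^ 2 := by
  have hq : 0 ≤ ∑ k, (z k - y k) ^ 2 := by positivity
  rw [← Real.le_sqrt (norm_nonneg _) hq, pi_norm_le_iff_of_nonneg (Real.sqrt_nonneg _)]
  intro k
  rw [Pi.sub_apply, Real.norm_eq_abs, ← Real.sqrt_sq_eq_abs]
  exact Real.sqrt_le_sqrt
    (Finset.single_le_sum (fun k _ => sq_nonneg (z k - y k)) (Finset.mem_univ k))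

theorem tendsto_sum_sq_sub_cocompact (y : Fin n → ℝ) :
    Tendsto (fun z : Fin n → ℝ => ∑ k, (z k - y k) ^ 2) (cocompact _) atTop :=
  tendsto_atTop_mono (norm_sub_sq_le_sum_sq_sub y) <| (tendsto_pow_atTop two_ne_zero).comp
    (tendsto_norm_cocompact_atTop.comp (Homeomorph.subRight y).map_cocompact.le)

theorem exists_le_and_pd_pd_le {w : (Fin n → ℝ) → ℝ} (hw : ContDiff ℝ 2 w)
    (hbdd : BddAbove (Set.range w)) (y : Fin n → ℝ) {ε : ℝ} (hε : 0 < ε) :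
    ∃ x, w y ≤ w x ∧ ∀ j, pd j (pd j w) x ≤ ε := by
  obtain ⟨B, hB⟩ := hbdd
  set q : (Fin n → ℝ) → ℝ := fun z => ∑ k, (z k - y k) ^ 2 with hq_def
  set v : (Fin n → ℝ) → ℝ := fun z => w z - ε / 2 * q z with hv_def
  have hq : ContDiff ℝ 2 q := by fun_prop
  have hv : ContDiff ℝ 2 v := hw.sub (contDiff_const.mul hq)
  have hqy : q y = 0 := by simp [hq_def]
  have hfar : ∀ᶠ z in cocompact _, v z ≤ v y := by
    filter_upwards [(tendsto_sum_sq_sub_cocompact y).eventually_ge_atTop ((B - w y) / (ε / 2))]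
      with z hz
    rw [div_le_iff₀' (by positivity)] at hz
    have hwB := hB (Set.mem_range_self z)
    simp only [hv_def, hqy]
    linarith
  obtain ⟨x, hx⟩ := hv.continuous.exists_forall_ge' y hfar
  refine ⟨x, ?_, fun j => ?_⟩
  · have hqx : 0 ≤ q x := by positivity
    have hvy := hx y
    simp only [hv_def, hqy] at hvy
    nlinarith
  · have hw1 : Differentiable ℝ w := hw.differentiable two_ne_zero
    have hq1 : Differentiable ℝ q := hq.differentiable two_ne_zero
    have hpdv : pd j v = fun z => pd j w z - ε * (z j - y j) := by
      funext z
      rw [pd_sub (hw1 z) ((hq1 z).const_mul _), pd_const_mul (hq1 z), pd_sum_sq_sub]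
      ring
    have hpd2v : pd j (pd j v) x = pd j (pd j w) x - ε := by
      have hlin : HasFDerivAt (fun z : Fin n → ℝ => ε * (z j - y j))
          (ε • ContinuousLinearMap.proj (R := ℝ) (φ := fun _ : Fin n => ℝ) j) x :=
        ((hasFDerivAt_apply j x).sub_const (y j)).const_mul ε
      rw [hpdv, pd_sub (((contDiff_pd hw j).differentiable one_ne_zero) x)
        hlin.differentiableAt, hlin.pd_eq]
      simp
    have hmax : IsLocalMax v x := IsMaxOn.isLocalMax (fun z _ => hx z) Filter.univ_mem
    have hpd2v_nonpos := pd_pd_nonpos_of_isLocalMax (hv.differentiable two_ne_zero)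
      (((contDiff_pd hv j).differentiable one_ne_zero) x) hmax
    linarith

theorem le_of_sub_le_sum_mul_pd_pd {w : (Fin n → ℝ) → ℝ} (hw : ContDiff ℝ 2 w)
    (hbdd : BddAbove (Set.range w)) {c : Fin n → ℝ} (hc : ∀ j, 0 ≤ c j) {C : ℝ}
    (hL : ∀ x, w x - C ≤ ∑ j, c j * pd j (pd j w) x) (y : Fin n → ℝ) : w y ≤ C := by
  refine le_of_forall_pos_le_add fun δ hδ => ?_
  set S := ∑ j, c j
  have hS : 0 ≤ S := Finset.sum_nonneg fun j _ => hc j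
  obtain ⟨x, hyx, hx⟩ := exists_le_and_pd_pd_le hw hbdd y (ε := δ / (S + 1)) (by positivity)
  have hsum : ∑ j, c j * pd j (pd j w) x ≤ δ / (S + 1) * S := by
    rw [Finset.mul_sum]
    exact Finset.sum_le_sum fun j _ => by nlinarith [hx j, hc j]
  have hδS : δ / (S + 1) * S ≤ δ := by
    rw [div_mul_eq_mul_div, div_le_iff₀ (by positivity)]
    nlinarith
  linarith [hL x]

end PartialDeriv

namespace MagneticLaplacian

open PartialDeriv

variable {n : ℕ} {A : (Fin n → ℝ) → Fin n → ℝ} {j : Fin n} {x : Fin n → ℝ}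

theorem pd_re_conj_mul {u v : (Fin n → ℝ) → ℂ} (hu : DifferentiableAt ℝ u x)
    (hv : DifferentiableAt ℝ v x) :
    pd j (fun y => (conj (u y) * v y).re) x
      = (conj (covD j A u x) * v x + conj (u x) * covD j A v x).re := by
  have hcu : DifferentiableAt ℝ (fun y => conj (u y)) x := hu.star
  rw [pd_re (u := fun y => conj (u y) * v y) (hcu.mul hv), pd_mul hcu hv, pd_conj hu]
  -- the `Aⱼ`-terms cancel because `Aⱼ` is real
  simp only [covD, map_sub, map_mul, conj_I, conj_ofReal]
  ring_nf

theorem contDiff_covD {k : ℕ} {u : (Fin n → ℝ) → ℂ} (hA : ContDiff ℝ k A)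
    (hu : ContDiff ℝ (k + 1) u) (j : Fin n) : ContDiff ℝ k (covD j A u) := by
  have hAj : ContDiff ℝ k fun y => (A y j : ℂ) :=
    ofRealCLM.contDiff.comp (contDiff_pi.mp hA j)
  exact (contDiff_pd hu j).sub ((contDiff_const.mul hAj).mul (hu.of_le (by norm_cast; omega)))

theorem pd_pd_norm_sq {φ : (Fin n → ℝ) → ℂ} (hA : ContDiff ℝ 1 A) (hφ : ContDiff ℝ 2 φ)
    (j : Fin n) (x : Fin n → ℝ) :
    pd j (pd j fun y => ‖φ y‖ ^ 2) x
      = 2 * ‖covD j A φ x‖ ^ 2 + 2 * (conj (φ x) * covD j A (covD j A φ) x).re := by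
  have hφ1 : Differentiable ℝ φ := hφ.differentiable two_ne_zero
  have hDφ : Differentiable ℝ (covD j A φ) :=
    (contDiff_covD (k := 1) hA hφ j).differentiable one_ne_zero
  have hnorm : (fun y => ‖φ y‖ ^ 2) = fun y => (conj (φ y) * φ y).re := by
    funext y
    simp [Complex.conj_mul', ← ofReal_pow]
  have hpd : pd j (fun y => ‖φ y‖ ^ 2) = fun y => 2 * (conj (φ y) * covD j A φ y).re := by
    funext y
    rw [hnorm, pd_re_conj_mul (A := A) (hφ1 y) (hφ1 y)]
    simp only [add_re, mul_re, conj_re, conj_im]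
    ring
  have hre : DifferentiableAt ℝ (fun y => (conj (φ y) * covD j A φ y).re) x :=
    reCLM.differentiableAt.comp x ((hφ1 x).star.mul (hDφ x))
  rw [hpd, pd_const_mul hre, pd_re_conj_mul (hφ1 x) (hDφ x), add_re, Complex.conj_mul']
  simp only [← ofReal_pow, ofReal_re]
  ring

theorem norm_sq_sub_le_sum_mul_pd_pd {lam : Fin n → ℝ} {φ h : (Fin n → ℝ) → ℂ}
    (hA : ContDiff ℝ 1 A) (hφ : ContDiff ℝ 2 φ)
    (heq : ∀ x, -∑ j, ((lam j : ℝ) : ℂ) ^ 2 * covD j A (covD j A φ) x + φ x = h x)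
    (x : Fin n → ℝ) :
    ‖φ x‖ ^ 2 - ‖h x‖ ^ 2 ≤ ∑ j, lam j ^ 2 * pd j (pd j fun y => ‖φ y‖ ^ 2) x := by
  have hsum : ∑ j, ((lam j : ℝ) : ℂ) ^ 2 * covD j A (covD j A φ) x = φ x - h x := by
    linear_combination -heq x
  have hre : ∑ j, lam j ^ 2 * (conj (φ x) * covD j A (covD j A φ) x).re
      = ‖φ x‖ ^ 2 - (conj (φ x) * h x).re := by
    have := congrArg (fun z => (conj (φ x) * z).re) hsum
    simp only [Finset.mul_sum, re_sum, mul_sub, sub_re, Complex.conj_mul'] at this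
    simpa [← ofReal_pow, mul_left_comm (conj (φ x)), re_ofReal_mul] using this
  have hcross : (conj (φ x) * h x).re ≤ ‖φ x‖ * ‖h x‖ := by
    simpa using re_le_norm (conj (φ x) * h x)
  calc ‖φ x‖ ^ 2 - ‖h x‖ ^ 2 ≤ 2 * (‖φ x‖ ^ 2 - (conj (φ x) * h x).re) := by
        nlinarith [sq_nonneg (‖φ x‖ - ‖h x‖)]
    _ = ∑ j, lam j ^ 2 * (2 * (conj (φ x) * covD j A (covD j A φ) x).re) := by
        rw [← hre, Finset.mul_sum]
        exact Finset.sum_congr rfl fun j _ => by ring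
    _ ≤ ∑ j, lam j ^ 2 * pd j (pd j fun y => ‖φ y‖ ^ 2) x := by
        gcongr with j
        rw [pd_pd_norm_sq hA hφ]
        nlinarith [sq_nonneg ‖covD j A φ x‖]

end MagneticLaplacian

theorem statement12_general {n : ℕ} (lam : Fin n → ℝ)
    (A : (Fin n → ℝ) → Fin n → ℝ) (hA : ContDiff ℝ 1 A)
    (φ h : (Fin n → ℝ) → ℂ) (hφ : ContDiff ℝ 2 φ)
    (hφbdd : BddAbove (Set.range fun x => ‖φ x‖))
    (hhbdd : BddAbove (Set.range fun x => ‖h x‖))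
    (heq : ∀ x : Fin n → ℝ,
      -∑ j : Fin n, ((lam j : ℝ) : ℂ) ^ 2 * covD j A (covD j A φ) x + φ x = h x) :
    ∀ x : Fin n → ℝ, ‖φ x‖ ≤ ⨆ y : Fin n → ℝ, ‖h y‖ := by
  intro x
  set H := ⨆ y, ‖h y‖
  have hH : ∀ y, ‖h y‖ ≤ H := le_ciSup hhbdd
  have hH0 : 0 ≤ H := (norm_nonneg _).trans (hH x)
  have hw : ContDiff ℝ 2 fun y => ‖φ y‖ ^ 2 := (contDiff_norm_sq ℝ).comp hφ
  have hw_bdd : BddAbove (Set.range fun y => ‖φ y‖ ^ 2) := by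
    obtain ⟨M, hM⟩ := hφbdd
    exact ⟨M ^ 2, by
      rintro _ ⟨y, rfl⟩
      exact pow_le_pow_left₀ (norm_nonneg _) (hM ⟨y, rfl⟩) 2⟩
  have hsq : ‖φ x‖ ^ 2 ≤ H ^ 2 :=
    PartialDeriv.le_of_sub_le_sum_mul_pd_pd hw hw_bdd (fun j => sq_nonneg (lam j))
      (fun y => (MagneticLaplacian.norm_sq_sub_le_sum_mul_pd_pd hA hφ heq y).trans' (by
        gcongr
        exact hH y)) x
  exact (pow_le_pow_iff_left₀ (norm_nonneg _) hH0 two_ne_zero).mp hsq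

theorem statement12 {n : ℕ} (lam : Fin n → ℝ) (hlam : ∀ j, 0 < lam j)
    (A : (Fin n → ℝ) → Fin n → ℝ) (hA : ContDiff ℝ 1 A)
    (φ h : (Fin n → ℝ) → ℂ) (hφ : ContDiff ℝ 2 φ)
    (hφbdd : BddAbove (Set.range fun x => ‖φ x‖))
    (hhbdd : BddAbove (Set.range fun x => ‖h x‖))
    (heq : ∀ x : Fin n → ℝ,
      -∑ j : Fin n, ((lam j : ℝ) : ℂ) ^ 2 * covD j A (covD j A φ) x + φ x = h x) :
    ∀ x : Fin n → ℝ, ‖φ x‖ ≤ ⨆ y : Fin n → ℝ, ‖h y‖ :=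
  statement12_general lam A hA φ h hφ hφbdd hhbdd heq

end
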